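/- (Equivocation bound via the source correlation.) Let (A_i, C_i, E_i), i = 1,…,N, be i.i.d. finite-valued triples with pmf p_{ACE}, and let J = f_A(A^N) and K = f_C(C^N) be arbitrary functions of the blocks A^N and C^N respectively. Then H(A^N | J, E^N) ≤ H(A^N, C^N | J, K) + N·I(A;C), where I(A;C) is the single-letter mutual information between A and C under p_{ACE}. -/
import Mathlib


open scoped BigOperators

noncomputable section

namespace SSW

/-- Probability that the random variable `X` takes the value `x`, under the pmf `p`. -/
def pr {Ω α : Type*} [Fintype Ω] (p : Ω → ℝ) (X : Ω → α) (x : α) : ℝ :=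
  ∑ ω, @ite _ (X ω = x) (Classical.propDecidable _) (p ω) 0

/-- Probability of the event `s` under the pmf `p`. -/
def prE {Ω : Type*} [Fintype Ω] (p : Ω → ℝ) (s : Ω → Prop) : ℝ :=
  ∑ ω, @ite _ (s ω) (Classical.propDecidable _) (p ω) 0

/-- Shannon entropy (base 2) of the random variable `X` under the pmf `p`. -/
def H {Ω α : Type*} [Fintype Ω] [Fintype α] (p : Ω → ℝ) (X : Ω → α) : ℝ :=
  ∑ x, -(pr p X x * Real.logb 2 (pr p X x))

/-- Conditional Shannon entropy `H(X|Y) = H(X,Y) - H(Y)` (base 2). -/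
def Hc {Ω α β : Type*} [Fintype Ω] [Fintype α] [Fintype β]
    (p : Ω → ℝ) (X : Ω → α) (Y : Ω → β) : ℝ :=
  H p (fun ω => (X ω, Y ω)) - H p Y

/-- Mutual information `I(X;Y) = H(X) + H(Y) - H(X,Y)` (base 2). -/
def MI {Ω α β : Type*} [Fintype Ω] [Fintype α] [Fintype β]
    (p : Ω → ℝ) (X : Ω → α) (Y : Ω → β) : ℝ :=
  H p X + H p Y - H p (fun ω => (X ω, Y ω))

/-- Conditional mutual information `I(X;Y|Z) = H(X|Z) - H(X|Y,Z)` (base 2). -/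
def cMI {Ω α β γ : Type*} [Fintype Ω] [Fintype α] [Fintype β] [Fintype γ]
    (p : Ω → ℝ) (X : Ω → α) (Y : Ω → β) (Z : Ω → γ) : ℝ :=
  Hc p X Z - Hc p X (fun ω => (Y ω, Z ω))

/-- `p` is a probability mass function on the finite type `Ω`. -/
def IsPMF {Ω : Type*} [Fintype Ω] (p : Ω → ℝ) : Prop :=
  (∀ ω, 0 ≤ p ω) ∧ ∑ ω, p ω = 1

/-- The Markov chain `X − Y − Z`: `X` and `Z` are conditionally independent given `Y`. -/
def Markov {Ω α β γ : Type*} [Fintype Ω] (p : Ω → ℝ)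
    (X : Ω → α) (Y : Ω → β) (Z : Ω → γ) : Prop :=
  ∀ x y z,
    pr p (fun ω => (X ω, Y ω, Z ω)) (x, y, z) * pr p Y y =
      pr p (fun ω => (X ω, Y ω)) (x, y) * pr p (fun ω => (Y ω, Z ω)) (y, z)

/-- `k` is a conditional probability kernel from `α` to `β`. -/
def IsKernel {α β : Type*} [Fintype β] (k : α → β → ℝ) : Prop :=
  ∀ a, (∀ b, 0 ≤ k a b) ∧ ∑ b, k a b = 1

/-- The i.i.d. block pmf on `Fin N → S` induced by the single-letter pmf `p` on `S`. -/
def blk {S : Type*} [Fintype S] (N : ℕ) (p : S → ℝ) : (Fin N → S) → ℝ :=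
  fun ω => ∏ i, p (ω i)

end SSW

open SSW


namespace EQB
open Real Finset SSW

set_option linter.unusedSectionVars false

variable {α β γ : Type*} [Fintype α] [Fintype β] [Fintype γ]

/-- pushforward of a weight function along a map -/
def pf {α β : Type*} [Fintype α] (μ : α → ℝ) (φ : α → β) : β → ℝ :=
  fun b => ∑ a, @ite _ (φ a = b) (Classical.propDecidable _) (μ a) 0

/-- natural-log entropy of a weight function -/
def Hd {α : Type*} [Fintype α] (μ : α → ℝ) : ℝ := ∑ a, Real.negMulLog (μ a)

lemma pf_nonneg (μ : α → ℝ) (hμ : ∀ a, 0 ≤ μ a) (φ : α → β) (b : β) : 0 ≤ pf μ φ b := by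
  refine Finset.sum_nonneg fun a _ => ?_
  split_ifs with h
  · exact hμ a
  · exact le_rfl

lemma sum_pf (μ : α → ℝ) (φ : α → β) : ∑ b, pf μ φ b = ∑ a, μ a := by
  unfold pf
  rw [Finset.sum_comm]
  refine Finset.sum_congr rfl fun a _ => ?_
  rw [Finset.sum_eq_single (φ a)]
  · rw [if_pos rfl]
  · intro b _ hb
    rw [if_neg (fun h => hb h.symm)]
  · intro h; exact absurd (Finset.mem_univ _) h

lemma pf_comp (μ : α → ℝ) (φ : α → β) (ψ : β → γ) (c : γ) :
    pf μ (fun a => ψ (φ a)) c = pf (pf μ φ) ψ c := by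
  unfold pf
  rw [show (∑ b, @ite _ (ψ b = c) (Classical.propDecidable _)
        (∑ a, @ite _ (φ a = b) (Classical.propDecidable _) (μ a) 0) 0)
      = ∑ b, ∑ a, @ite _ (ψ b = c) (Classical.propDecidable _)
        (@ite _ (φ a = b) (Classical.propDecidable _) (μ a) 0) 0 from
    Finset.sum_congr rfl fun b _ => by split_ifs <;> simp]
  rw [Finset.sum_comm]
  refine Finset.sum_congr rfl fun a _ => ?_
  rw [Finset.sum_eq_single (φ a)]
  · split_ifs with h1 h2 h2 <;> simp_all
  · intro b _ hb
    split_ifs with h1 h2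
    · exact absurd h2.symm hb
    · rfl
    · rfl
  · intro h; exact absurd (Finset.mem_univ _) h

lemma pf_inj_apply (μ : α → ℝ) {φ : α → β} (hφ : Function.Injective φ) (a : α) :
    pf μ φ (φ a) = μ a := by
  unfold pf
  rw [Finset.sum_eq_single a]
  · rw [if_pos rfl]
  · intro a' _ ha'
    rw [if_neg (fun h => ha' (hφ h))]
  · intro h; exact absurd (Finset.mem_univ _) h

lemma pf_eq_zero (μ : α → ℝ) {φ : α → β} {b : β} (hb : ∀ a, φ a ≠ b) : pf μ φ b = 0 := by
  unfold pf
  refine Finset.sum_eq_zero fun a _ => if_neg (hb a)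

lemma Hd_pf_inj (μ : α → ℝ) {φ : α → β} (hφ : Function.Injective φ) :
    Hd (pf μ φ) = Hd μ := by
  classical
  unfold Hd
  rw [← Finset.sum_subset (Finset.subset_univ (Finset.univ.image φ))]
  · rw [Finset.sum_image (fun a _ a' _ h => hφ h)]
    exact Finset.sum_congr rfl fun a _ => by rw [pf_inj_apply μ hφ]
  · intro b _ hb
    rw [pf_eq_zero μ (fun a h => hb (Finset.mem_image.mpr ⟨a, Finset.mem_univ a, h⟩))]
    simp


lemma pf_fst (μ : α × β → ℝ) (a : α) : pf μ Prod.fst a = ∑ b, μ (a, b) := by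
  unfold pf
  rw [Fintype.sum_prod_type, Finset.sum_eq_single a]
  · exact Finset.sum_congr rfl fun b _ => if_pos rfl
  · intro x _ hx; exact Finset.sum_eq_zero fun b _ => if_neg hx
  · intro h; exact absurd (Finset.mem_univ _) h

lemma pf_m3 (μ : α × β × γ → ℝ) (c : γ) :
    pf μ (fun x => x.2.2) c = ∑ a, ∑ b, μ (a, b, c) := by
  unfold pf
  rw [Fintype.sum_prod_type]
  refine Finset.sum_congr rfl fun a _ => ?_
  rw [Fintype.sum_prod_type]
  refine Finset.sum_congr rfl fun b _ => ?_
  rw [Finset.sum_eq_single c]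
  · exact if_pos rfl
  · intro z _ hz; exact if_neg hz
  · intro h; exact absurd (Finset.mem_univ _) h

lemma pf_m23 (μ : α × β × γ → ℝ) (b : β) (c : γ) :
    pf μ (fun x => x.2) (b, c) = ∑ a, μ (a, b, c) := by
  unfold pf
  rw [Fintype.sum_prod_type]
  refine Finset.sum_congr rfl fun a _ => ?_
  rw [Finset.sum_eq_single ((b, c) : β × γ)]
  · exact if_pos rfl
  · intro y _ hy; exact if_neg hy
  · intro h; exact absurd (Finset.mem_univ _) h

lemma pf_m13 (μ : α × β × γ → ℝ) (a : α) (c : γ) :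
    pf μ (fun x => (x.1, x.2.2)) (a, c) = ∑ b, μ (a, b, c) := by
  unfold pf
  rw [Fintype.sum_prod_type, Finset.sum_eq_single a]
  · rw [Fintype.sum_prod_type]
    refine Finset.sum_congr rfl fun b _ => ?_
    rw [Finset.sum_eq_single c]
    · exact if_pos rfl
    · intro z _ hz
      refine if_neg fun h => hz ?_
      exact (Prod.mk.injEq _ _ _ _ ▸ h).2
    · intro h; exact absurd (Finset.mem_univ _) h
  · intro x _ hx
    refine Finset.sum_eq_zero fun yz _ => if_neg fun h => hx ?_
    exact (Prod.mk.injEq _ _ _ _ ▸ h).1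
  · intro h; exact absurd (Finset.mem_univ _) h

/-- termwise bound: `-(t * log M) ≤ negMulLog t` for `0 ≤ t ≤ M`. -/
lemma neg_mul_log_le (t M : ℝ) (ht : 0 ≤ t) (htM : t ≤ M) :
    -(t * Real.log M) ≤ Real.negMulLog t := by
  rcases eq_or_lt_of_le ht with h | h
  · simp [← h]
  · rw [Real.negMulLog, neg_mul, neg_le_neg_iff]
    exact mul_le_mul_of_nonneg_left (Real.log_le_log h htM) ht

lemma Hd_pf_fst_le (μ : α × β → ℝ) (hμ : ∀ x, 0 ≤ μ x) : Hd (pf μ Prod.fst) ≤ Hd μ := by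
  unfold Hd
  rw [Fintype.sum_prod_type]
  refine Finset.sum_le_sum fun a _ => ?_
  rw [pf_fst]
  have key : ∀ b : β, -(μ (a, b) * Real.log (∑ b', μ (a, b'))) ≤ Real.negMulLog (μ (a, b)) :=
    fun b => neg_mul_log_le _ _ (hμ _)
      (Finset.single_le_sum (fun b' _ => hμ (a, b')) (Finset.mem_univ b))
  calc Real.negMulLog (∑ b, μ (a, b))
      = ∑ b, -(μ (a, b) * Real.log (∑ b', μ (a, b'))) := by
        rw [Real.negMulLog, neg_mul, Finset.sum_mul, ← Finset.sum_neg_distrib]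
    _ ≤ ∑ b, Real.negMulLog (μ (a, b)) := Finset.sum_le_sum fun b _ => key b


def m13 (μ : α × β × γ → ℝ) (a : α) (c : γ) : ℝ := ∑ b, μ (a, b, c)
def m23 (μ : α × β × γ → ℝ) (b : β) (c : γ) : ℝ := ∑ a, μ (a, b, c)
def m3 (μ : α × β × γ → ℝ) (c : γ) : ℝ := ∑ a, ∑ b, μ (a, b, c)
def Qf (μ : α × β × γ → ℝ) (x : α × β × γ) : ℝ :=
  m13 μ x.1 x.2.2 * m23 μ x.2.1 x.2.2 / m3 μ x.2.2

lemma sum_rot (f : α → β → γ → ℝ) :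
    ∑ a, ∑ b, ∑ c, f a b c = ∑ c, ∑ a, ∑ b, f a b c := by
  rw [show (∑ a, ∑ b, ∑ c, f a b c) = ∑ a, ∑ c, ∑ b, f a b c from
    Finset.sum_congr rfl fun a _ => Finset.sum_comm]
  exact Finset.sum_comm

/-- one Gibbs term -/
lemma gibbs_term {t A B M : ℝ} (ht : 0 ≤ t) (htA : t ≤ A) (htB : t ≤ B) (htM : t ≤ M) :
    Real.negMulLog t + -(t * Real.log M) ≤
      -(t * Real.log A) + -(t * Real.log B) + (A * B / M - t) := by
  rcases eq_or_lt_of_le ht with h | h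
  · have hAB : 0 ≤ A * B / M :=
      div_nonneg (mul_nonneg (ht.trans htA) (ht.trans htB)) (ht.trans htM)
    simp [← h]
    linarith
  · have hA : 0 < A := lt_of_lt_of_le h htA
    have hB : 0 < B := lt_of_lt_of_le h htB
    have hM : 0 < M := lt_of_lt_of_le h htM
    have hlog : Real.log (A * B / (t * M)) ≤ A * B / (t * M) - 1 :=
      Real.log_le_sub_one_of_pos (by positivity)
    have h2 : t * Real.log (A * B / (t * M)) ≤ t * (A * B / (t * M) - 1) :=
      mul_le_mul_of_nonneg_left hlog h.le
    have h3 : Real.log (A * B / (t * M)) =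
        Real.log A + Real.log B - Real.log t - Real.log M := by
      rw [Real.log_div (by positivity) (by positivity), Real.log_mul hA.ne' hB.ne',
        Real.log_mul h.ne' hM.ne']
      ring
    have h4 : t * (A * B / (t * M) - 1) = A * B / M - t := by
      field_simp
    rw [h3] at h2
    have h6 : t * (Real.log A + Real.log B - Real.log t - Real.log M)
        = t * Real.log A + t * Real.log B - t * Real.log t - t * Real.log M := by ring
    rw [h6, h4] at h2
    rw [Real.negMulLog, neg_mul]
    linarith

lemma pull {S : Type*} [Fintype S] (g : S → ℝ) :
    Real.negMulLog (∑ s, g s) = ∑ s : S, -(g s * Real.log (∑ s', g s')) := by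
  rw [Real.negMulLog, neg_mul, Finset.sum_mul, ← Finset.sum_neg_distrib]

lemma Hd_master (μ : α × β × γ → ℝ) (hμ : ∀ x, 0 ≤ μ x) :
    Hd μ + Hd (pf μ (fun x => x.2.2)) ≤
      Hd (pf μ (fun x => (x.1, x.2.2))) + Hd (pf μ (fun x => x.2)) := by
  -- rewrite entropies of marginals
  have e3 : Hd (pf μ (fun x => x.2.2)) = ∑ c, Real.negMulLog (m3 μ c) :=
    Finset.sum_congr rfl fun c _ => by rw [pf_m3]; rfl
  have e13 : Hd (pf μ (fun x => (x.1, x.2.2))) = ∑ a, ∑ c, Real.negMulLog (m13 μ a c) := by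
    unfold Hd
    rw [Fintype.sum_prod_type]
    exact Finset.sum_congr rfl fun a _ => Finset.sum_congr rfl fun c _ => by rw [pf_m13]; rfl
  have e23 : Hd (pf μ (fun x => x.2)) = ∑ b, ∑ c, Real.negMulLog (m23 μ b c) := by
    unfold Hd
    rw [Fintype.sum_prod_type]
    exact Finset.sum_congr rfl fun b _ => Finset.sum_congr rfl fun c _ => by rw [pf_m23]; rfl
  -- resummation identities
  have r13 : ∑ a, ∑ c, Real.negMulLog (m13 μ a c)
      = ∑ x : α × β × γ, -(μ x * Real.log (m13 μ x.1 x.2.2)) := by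
    rw [Fintype.sum_prod_type]
    refine Finset.sum_congr rfl fun a _ => ?_
    rw [Fintype.sum_prod_type, Finset.sum_comm]
    refine Finset.sum_congr rfl fun c _ => ?_
    exact pull (fun b => μ (a, b, c))
  have r23 : ∑ b, ∑ c, Real.negMulLog (m23 μ b c)
      = ∑ x : α × β × γ, -(μ x * Real.log (m23 μ x.2.1 x.2.2)) := by
    rw [show (∑ x : α × β × γ, -(μ x * Real.log (m23 μ x.2.1 x.2.2)))
        = ∑ y : β × γ, ∑ a, -(μ (a, y.1, y.2) * Real.log (m23 μ y.1 y.2)) from by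
      rw [Fintype.sum_prod_type]; exact Finset.sum_comm]
    rw [Fintype.sum_prod_type]
    refine Finset.sum_congr rfl fun b _ => Finset.sum_congr rfl fun c _ => ?_
    exact pull (fun a => μ (a, b, c))
  have r3 : ∑ c, Real.negMulLog (m3 μ c)
      = ∑ x : α × β × γ, -(μ x * Real.log (m3 μ x.2.2)) := by
    rw [show (∑ x : α × β × γ, -(μ x * Real.log (m3 μ x.2.2)))
        = ∑ a, ∑ b, ∑ c, -(μ (a, b, c) * Real.log (m3 μ c)) from by
      rw [Fintype.sum_prod_type]
      exact Finset.sum_congr rfl fun a _ => by rw [Fintype.sum_prod_type]]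
    rw [sum_rot]
    refine Finset.sum_congr rfl fun c _ => ?_
    rw [Real.negMulLog, neg_mul]
    show -(m3 μ c * Real.log (m3 μ c)) = _
    rw [show m3 μ c * Real.log (m3 μ c) = ∑ a, ((∑ b, μ (a, b, c)) * Real.log (m3 μ c)) from by
      rw [← Finset.sum_mul]; rfl]
    rw [← Finset.sum_neg_distrib]
    refine Finset.sum_congr rfl fun a _ => ?_
    rw [Finset.sum_mul, ← Finset.sum_neg_distrib]
  -- termwise Gibbs bound
  have key : ∀ x : α × β × γ,
      Real.negMulLog (μ x) + -(μ x * Real.log (m3 μ x.2.2)) ≤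
        (-(μ x * Real.log (m13 μ x.1 x.2.2)) + -(μ x * Real.log (m23 μ x.2.1 x.2.2)))
          + (Qf μ x - μ x) := by
    rintro ⟨a, b, c⟩
    have htA : μ (a, b, c) ≤ m13 μ a c :=
      Finset.single_le_sum (fun b' _ => hμ (a, b', c)) (Finset.mem_univ b)
    have htB : μ (a, b, c) ≤ m23 μ b c :=
      Finset.single_le_sum (fun a' _ => hμ (a', b, c)) (Finset.mem_univ a)
    have htM : μ (a, b, c) ≤ m3 μ c :=
      htA.trans (Finset.single_le_sum
        (fun a' _ => Finset.sum_nonneg fun b' _ => hμ (a', b', c)) (Finset.mem_univ a))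
    have := gibbs_term (hμ (a, b, c)) htA htB htM
    simpa [Qf] using this
  -- Gibbs slack is globally nonpositive
  have hQ : ∑ x : α × β × γ, Qf μ x ≤ ∑ x, μ x := by
    have hL : ∑ x : α × β × γ, Qf μ x = ∑ c, m3 μ c * m3 μ c / m3 μ c := by
      rw [show (∑ x : α × β × γ, Qf μ x)
          = ∑ a, ∑ b, ∑ c, (m13 μ a c * m23 μ b c / m3 μ c) from by
        rw [Fintype.sum_prod_type]
        exact Finset.sum_congr rfl fun a _ => by rw [Fintype.sum_prod_type]; rfl]
      rw [sum_rot]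
      refine Finset.sum_congr rfl fun c _ => ?_
      rw [show (∑ a, ∑ b, m13 μ a c * m23 μ b c / m3 μ c)
          = ∑ a, (m13 μ a c * (∑ b, m23 μ b c) / m3 μ c) from
        Finset.sum_congr rfl fun a _ => by rw [← Finset.sum_div, ← Finset.mul_sum]]
      rw [← Finset.sum_div, ← Finset.sum_mul]
      congr 1
      · congr 1
        exact Finset.sum_comm
    have hR : ∑ x : α × β × γ, μ x = ∑ c, m3 μ c := by
      rw [show (∑ x : α × β × γ, μ x) = ∑ a, ∑ b, ∑ c, μ (a, b, c) from by
        rw [Fintype.sum_prod_type]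
        exact Finset.sum_congr rfl fun a _ => by rw [Fintype.sum_prod_type]]
      rw [sum_rot]
      rfl
    rw [hL, hR]
    refine Finset.sum_le_sum fun c _ => ?_
    by_cases h : m3 μ c = 0
    · simp [h]
    · rw [mul_div_assoc, div_self h, mul_one]
  -- combine
  rw [e3, e13, e23, r13, r23, r3]
  have big : (∑ x : α × β × γ, (Real.negMulLog (μ x) + -(μ x * Real.log (m3 μ x.2.2)))) ≤
      ∑ x : α × β × γ, ((-(μ x * Real.log (m13 μ x.1 x.2.2))
        + -(μ x * Real.log (m23 μ x.2.1 x.2.2))) + (Qf μ x - μ x)) :=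
    Finset.sum_le_sum fun x _ => key x
  rw [Finset.sum_add_distrib, Finset.sum_add_distrib, Finset.sum_add_distrib,
    Finset.sum_sub_distrib] at big
  have hHd : Hd μ = ∑ x : α × β × γ, Real.negMulLog (μ x) := rfl
  linarith


lemma H_eq {Ω α : Type*} [Fintype Ω] [Fintype α] (p : Ω → ℝ) (X : Ω → α) :
    SSW.H p X = Hd (pf p X) / Real.log 2 := by
  unfold SSW.H Hd
  rw [Finset.sum_div]
  refine Finset.sum_congr rfl fun x _ => ?_
  have h : pf p X x = SSW.pr p X x := rfl
  rw [h, Real.negMulLog, Real.logb]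
  ring

lemma Hd_pf_comp_inj (μ : α → ℝ) (φ : α → β) {σ : β → γ} (hσ : Function.Injective σ) :
    Hd (pf μ (fun a => σ (φ a))) = Hd (pf μ φ) := by
  rw [show pf μ (fun a => σ (φ a)) = pf (pf μ φ) σ from funext (pf_comp μ φ σ),
    Hd_pf_inj _ hσ]

lemma blk_sum {S : Type*} [Fintype S] (N : ℕ) (p : S → ℝ) (hp1 : ∑ s, p s = 1) :
    ∑ ω, blk N p ω = 1 := by
  have h := (Fintype.prod_sum (f := fun (_ : Fin N) (s : S) => p s)).symm
  calc ∑ ω : Fin N → S, blk N p ω = ∏ _i : Fin N, ∑ s, p s := h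
    _ = 1 := by rw [hp1]; exact Finset.prod_const_one

lemma pf_blk {S T : Type*} [Fintype S] [Fintype T] (N : ℕ) (p : S → ℝ) (φ : S → T)
    (f : Fin N → T) :
    pf (blk N p) (fun ω i => φ (ω i)) f = ∏ i, pf p φ (f i) := by
  have step : ∀ ω : Fin N → S,
      (@ite _ ((fun i => φ (ω i)) = f) (Classical.propDecidable _) (∏ i, p (ω i)) 0)
        = ∏ i, (@ite _ (φ (ω i) = f i) (Classical.propDecidable _) (p (ω i)) 0) := by
    intro ω
    by_cases h : (fun i => φ (ω i)) = f
    · rw [if_pos h]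
      exact Finset.prod_congr rfl fun i _ => (if_pos (congrFun h i)).symm
    · rw [if_neg h]
      obtain ⟨i, hi⟩ : ∃ i, φ (ω i) ≠ f i := by
        by_contra hc
        push_neg at hc
        exact h (funext hc)
      exact (Finset.prod_eq_zero
        (f := fun i => @ite _ (φ (ω i) = f i) (Classical.propDecidable _) (p (ω i)) 0)
        (Finset.mem_univ i) (if_neg hi)).symm
  rw [show pf (blk N p) (fun ω i => φ (ω i)) f
      = ∑ ω : Fin N → S, ∏ i, (@ite _ (φ (ω i) = f i) (Classical.propDecidable _) (p (ω i)) 0)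
    from Finset.sum_congr rfl fun ω _ => step ω]
  exact (Fintype.prod_sum
    (f := fun (i : Fin N) (s : S) => @ite _ (φ s = f i) (Classical.propDecidable _) (p s) 0)).symm

lemma Hd_prod {T : Type*} [Fintype T] (N : ℕ) (ν : T → ℝ) (hν : ∀ t, 0 ≤ ν t)
    (hν1 : ∑ t, ν t = 1) :
    Hd (fun f : Fin N → T => ∏ i, ν (f i)) = N * Hd ν := by
  induction N with
  | zero => simp [Hd]
  | succ n ih =>
    have hsum : ∑ g : Fin n → T, (∏ i, ν (g i)) = 1 := blk_sum n ν hν1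
    have hH : ∑ g : Fin n → T, Real.negMulLog (∏ i, ν (g i)) = n * Hd ν := ih
    have e : ∑ y : T × (Fin n → T),
          Real.negMulLog (∏ i : Fin (n + 1), ν ((Fin.cons y.1 y.2 : Fin (n + 1) → T) i))
        = ∑ f : Fin (n + 1) → T, Real.negMulLog (∏ i, ν (f i)) := by
      refine Fintype.sum_equiv (Fin.consEquiv (fun _ : Fin (n + 1) => T)) _ _ fun y => ?_
      rfl
    have e2 : ∀ y : T × (Fin n → T),
        Real.negMulLog (∏ i, ν ((Fin.cons y.1 y.2 : Fin (n + 1) → T) i))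
          = (∏ i, ν (y.2 i)) * Real.negMulLog (ν y.1)
            + ν y.1 * Real.negMulLog (∏ i, ν (y.2 i)) := by
      rintro ⟨x, g⟩
      rw [Fin.prod_univ_succ]
      simp only [Fin.cons_zero, Fin.cons_succ]
      exact Real.negMulLog_mul _ _
    calc Hd (fun f : Fin (n + 1) → T => ∏ i, ν (f i))
        = ∑ y : T × (Fin n → T), Real.negMulLog (∏ i : Fin (n + 1), ν ((Fin.cons y.1 y.2 : Fin (n + 1) → T) i)) :=
          e.symm
      _ = ∑ y : T × (Fin n → T), ((∏ i, ν (y.2 i)) * Real.negMulLog (ν y.1)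
            + ν y.1 * Real.negMulLog (∏ i, ν (y.2 i))) :=
          Finset.sum_congr rfl fun y _ => e2 y
      _ = ∑ x : T, ((∑ g : Fin n → T, ∏ i, ν (g i)) * Real.negMulLog (ν x)
            + ν x * ∑ g : Fin n → T, Real.negMulLog (∏ i, ν (g i))) := by
          rw [Fintype.sum_prod_type]
          refine Finset.sum_congr rfl fun x _ => ?_
          show (∑ g : Fin n → T, ((∏ i, ν (g i)) * Real.negMulLog (ν x)
            + ν x * Real.negMulLog (∏ i, ν (g i)))) = _
          rw [Finset.sum_add_distrib, ← Finset.sum_mul, ← Finset.mul_sum]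
      _ = ∑ x : T, (Real.negMulLog (ν x) + ν x * (n * Hd ν)) := by
          rw [hsum, hH]
          exact Finset.sum_congr rfl fun x _ => by rw [one_mul]
      _ = Hd ν + (∑ x, ν x) * (n * Hd ν) := by
          rw [Finset.sum_add_distrib, ← Finset.sum_mul]
          rfl
      _ = (n + 1 : ℕ) * Hd ν := by
          rw [hν1]
          push_cast
          ring

lemma Hd_subadd (μ : α × β → ℝ) (hμ : ∀ x, 0 ≤ μ x) (h1 : ∑ x, μ x = 1) :
    Hd μ ≤ Hd (pf μ Prod.fst) + Hd (pf μ Prod.snd) := by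
  set μ' := pf μ (fun x : α × β => ((x.1 : α), (x.2, ()))) with hμ'def
  have hinj : Function.Injective (fun x : α × β => ((x.1 : α), (x.2, ()))) := by
    rintro ⟨a, b⟩ ⟨a', b'⟩ h
    simp only [Prod.mk.injEq] at h
    exact Prod.ext h.1 h.2.1
  have hμ'nn : ∀ x, 0 ≤ μ' x := pf_nonneg μ hμ _
  have master := Hd_master μ' hμ'nn
  have c0 : Hd μ' = Hd μ := Hd_pf_inj μ hinj
  have c1 : pf μ' (fun x => x.2.2) = pf μ (fun _ => ()) :=
    funext fun z => (pf_comp μ _ (fun x : α × (β × Unit) => x.2.2) z).symm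
  have c2 : pf μ' (fun x => (x.1, x.2.2)) = pf μ (fun x => (x.1, ())) :=
    funext fun z => (pf_comp μ _ (fun x : α × (β × Unit) => (x.1, x.2.2)) z).symm
  have c3 : pf μ' (fun x => x.2) = pf μ (fun x => (x.2, ())) :=
    funext fun z => (pf_comp μ _ (fun x : α × (β × Unit) => x.2) z).symm
  rw [c0, c1, c2, c3] at master
  have d1 : Hd (pf μ (fun _ : α × β => ())) = 0 := by
    have : pf μ (fun _ : α × β => ()) () = 1 := by
      rw [← h1]
      exact Finset.sum_congr rfl fun x _ => if_pos rfl
    unfold Hd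
    rw [Fintype.sum_unique]
    rw [this]
    exact Real.negMulLog_one
  have d2 : Hd (pf μ (fun x : α × β => (x.1, ()))) = Hd (pf μ Prod.fst) :=
    Hd_pf_comp_inj μ Prod.fst (σ := fun a : α => (a, ()))
      fun a a' h => (Prod.mk.injEq _ _ _ _ ▸ h).1
  have d3 : Hd (pf μ (fun x : α × β => (x.2, ()))) = Hd (pf μ Prod.snd) :=
    Hd_pf_comp_inj μ Prod.snd (σ := fun b : β => (b, ()))
      fun b b' h => (Prod.mk.injEq _ _ _ _ ▸ h).1
  rw [d1, d2, d3] at master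
  linarith


lemma final_div {u1 u2 u3 u4 u5 u6 u7 c n : ℝ} (hc : 0 < c)
    (key : u1 - u2 ≤ u3 - u4 + n * (u5 + u6 - u7)) :
    u1 / c - u2 / c ≤ u3 / c - u4 / c + n * (u5 / c + u6 / c - u7 / c) := by
  have e1 : u1 / c - u2 / c = (u1 - u2) / c := by ring
  have e2 : u3 / c - u4 / c + n * (u5 / c + u6 / c - u7 / c)
      = (u3 - u4 + n * (u5 + u6 - u7)) / c := by ring
  rw [e1, e2]
  exact div_le_div_of_nonneg_right key hc.le

end EQB

open EQB

/-- Equivocation bound via the source correlation: for `(A_i, C_i, E_i)` i.i.d. `~ p`,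
`J = f_A(A^N)` and `K = f_C(C^N)`, one has
`H(A^N | J, E^N) ≤ H(A^N, C^N | J, K) + N·I(A;C)`. -/
theorem equivocation_bound_correlation {𝒜 𝒞 ℰ κJ κK : Type}
    [Fintype 𝒜] [Fintype 𝒞] [Fintype ℰ] [Fintype κJ] [Fintype κK]
    (p : 𝒜 × 𝒞 × ℰ → ℝ) (hp : IsPMF p) (N : ℕ)
    (fA : (Fin N → 𝒜) → κJ) (fC : (Fin N → 𝒞) → κK) :
    Hc (blk N p) (fun ω => (fun i => (ω i).1))
        (fun ω => (fA (fun i => (ω i).1), fun i => (ω i).2.2)) ≤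
    Hc (blk N p) (fun ω => ((fun i => (ω i).1), (fun i => (ω i).2.1)))
        (fun ω => (fA (fun i => (ω i).1), fC (fun i => (ω i).2.1))) +
      N * MI p (fun x => x.1) (fun x => x.2.1) := by
  simp only [SSW.Hc, SSW.MI, H_eq]
  apply final_div (Real.log_pos one_lt_two)
  have hqnn : ∀ ω : Fin N → 𝒜 × 𝒞 × ℰ, 0 ≤ blk N p ω :=
    fun ω => Finset.prod_nonneg fun i _ => hp.1 _
  have hqsum : ∑ ω, blk N p ω = 1 := blk_sum N p hp.2
  -- abbreviations (as plain functions)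
  -- g1 : H(A,(J,E)) = H(A,E)
  have g1 : Hd (pf (blk N p) fun ω => ((fun i => (ω i).1 : Fin N → 𝒜),
        (fA fun i => (ω i).1, (fun i => (ω i).2.2 : Fin N → ℰ))))
      = Hd (pf (blk N p) fun ω => ((fun i => (ω i).1 : Fin N → 𝒜),
        (fun i => (ω i).2.2 : Fin N → ℰ))) :=
    Hd_pf_comp_inj (blk N p)
      (fun ω => ((fun i => (ω i).1 : Fin N → 𝒜), (fun i => (ω i).2.2 : Fin N → ℰ)))
      (σ := fun x : (Fin N → 𝒜) × (Fin N → ℰ) => (x.1, (fA x.1, x.2)))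
      (by
        rintro ⟨x, y⟩ ⟨x', y'⟩ h
        simp only [Prod.mk.injEq] at h
        exact Prod.ext h.1 h.2.2)
  -- g2 : H(A,(E,J)) = H(A,E)
  have g2 : Hd (pf (blk N p) fun ω => ((fun i => (ω i).1 : Fin N → 𝒜),
        ((fun i => (ω i).2.2 : Fin N → ℰ), fA fun i => (ω i).1)))
      = Hd (pf (blk N p) fun ω => ((fun i => (ω i).1 : Fin N → 𝒜),
        (fun i => (ω i).2.2 : Fin N → ℰ))) :=
    Hd_pf_comp_inj (blk N p)
      (fun ω => ((fun i => (ω i).1 : Fin N → 𝒜), (fun i => (ω i).2.2 : Fin N → ℰ)))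
      (σ := fun x : (Fin N → 𝒜) × (Fin N → ℰ) => (x.1, (x.2, fA x.1)))
      (by
        rintro ⟨x, y⟩ ⟨x', y'⟩ h
        simp only [Prod.mk.injEq] at h
        exact Prod.ext h.1 h.2.1)
  -- g3 : H(J,E) = H(E,J)
  have g3 : Hd (pf (blk N p) fun ω => (fA fun i => (ω i).1,
        (fun i => (ω i).2.2 : Fin N → ℰ)))
      = Hd (pf (blk N p) fun ω => ((fun i => (ω i).2.2 : Fin N → ℰ),
        fA fun i => (ω i).1)) :=
    Hd_pf_comp_inj (blk N p)
      (fun ω => ((fun i => (ω i).2.2 : Fin N → ℰ), fA fun i => (ω i).1))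
      (σ := fun x : (Fin N → ℰ) × κJ => (x.2, x.1))
      (by
        rintro ⟨x, y⟩ ⟨x', y'⟩ h
        simp only [Prod.mk.injEq] at h
        exact Prod.ext h.2 h.1)
  -- g4 : master, H(A,(E,J)) + H(J) ≤ H(A,J) + H(E,J)
  have g4 : Hd (pf (blk N p) fun ω => ((fun i => (ω i).1 : Fin N → 𝒜),
        ((fun i => (ω i).2.2 : Fin N → ℰ), fA fun i => (ω i).1)))
      + Hd (pf (blk N p) fun ω => fA fun i => (ω i).1)
      ≤ Hd (pf (blk N p) fun ω => ((fun i => (ω i).1 : Fin N → 𝒜), fA fun i => (ω i).1))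
        + Hd (pf (blk N p) fun ω => ((fun i => (ω i).2.2 : Fin N → ℰ),
          fA fun i => (ω i).1)) := by
    have m := Hd_master (pf (blk N p) fun ω => ((fun i => (ω i).1 : Fin N → 𝒜),
      ((fun i => (ω i).2.2 : Fin N → ℰ), fA fun i => (ω i).1))) (pf_nonneg _ hqnn _)
    have c1 : pf (pf (blk N p) fun ω => ((fun i => (ω i).1 : Fin N → 𝒜),
          ((fun i => (ω i).2.2 : Fin N → ℰ), fA fun i => (ω i).1)))
          (fun x => x.2.2)
        = pf (blk N p) (fun ω => fA fun i => (ω i).1) :=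
      funext fun z => (pf_comp (blk N p) _ _ z).symm
    have c2 : pf (pf (blk N p) fun ω => ((fun i => (ω i).1 : Fin N → 𝒜),
          ((fun i => (ω i).2.2 : Fin N → ℰ), fA fun i => (ω i).1)))
          (fun x => (x.1, x.2.2))
        = pf (blk N p) (fun ω => ((fun i => (ω i).1 : Fin N → 𝒜), fA fun i => (ω i).1)) :=
      funext fun z => (pf_comp (blk N p) _ _ z).symm
    have c3 : pf (pf (blk N p) fun ω => ((fun i => (ω i).1 : Fin N → 𝒜),
          ((fun i => (ω i).2.2 : Fin N → ℰ), fA fun i => (ω i).1)))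
          (fun x => x.2)
        = pf (blk N p) (fun ω => ((fun i => (ω i).2.2 : Fin N → ℰ), fA fun i => (ω i).1)) :=
      funext fun z => (pf_comp (blk N p) _ _ z).symm
    rw [c1, c2, c3] at m
    exact m
  -- g5 : H(A,J) = H(A)
  have g5 : Hd (pf (blk N p) fun ω => ((fun i => (ω i).1 : Fin N → 𝒜),
        fA fun i => (ω i).1))
      = Hd (pf (blk N p) fun ω => (fun i => (ω i).1 : Fin N → 𝒜)) :=
    Hd_pf_comp_inj (blk N p) (fun ω => (fun i => (ω i).1 : Fin N → 𝒜))
      (σ := fun x : Fin N → 𝒜 => (x, fA x))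
      (by
        intro x y h
        simp only [Prod.mk.injEq] at h
        exact h.1)
  -- g6 : H((A,C),(J,K)) = H(AC)
  have g6 : Hd (pf (blk N p) fun ω => (((fun i => (ω i).1 : Fin N → 𝒜),
        (fun i => (ω i).2.1 : Fin N → 𝒞)),
        (fA fun i => (ω i).1, fC fun i => (ω i).2.1)))
      = Hd (pf (blk N p) fun ω => (fun i => ((ω i).1, (ω i).2.1) : Fin N → 𝒜 × 𝒞)) :=
    Hd_pf_comp_inj (blk N p)
      (fun ω => (fun i => ((ω i).1, (ω i).2.1) : Fin N → 𝒜 × 𝒞))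
      (σ := fun g : Fin N → 𝒜 × 𝒞 =>
        (((fun i => (g i).1 : Fin N → 𝒜), (fun i => (g i).2 : Fin N → 𝒞)),
          (fA fun i => (g i).1, fC fun i => (g i).2)))
      (by
        intro g g' h
        simp only [Prod.mk.injEq] at h
        funext i
        exact Prod.ext (congrFun h.1.1 i) (congrFun h.1.2 i))
  -- g7 : H(J,K) ≤ H((J,K),C)
  have g7 : Hd (pf (blk N p) fun ω => (fA fun i => (ω i).1, fC fun i => (ω i).2.1))
      ≤ Hd (pf (blk N p) fun ω => ((fA fun i => (ω i).1, fC fun i => (ω i).2.1),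
        (fun i => (ω i).2.1 : Fin N → 𝒞))) := by
    have m := Hd_pf_fst_le (pf (blk N p) fun ω =>
      ((fA fun i => (ω i).1, fC fun i => (ω i).2.1),
        (fun i => (ω i).2.1 : Fin N → 𝒞))) (pf_nonneg _ hqnn _)
    have c1 : pf (pf (blk N p) fun ω => ((fA fun i => (ω i).1, fC fun i => (ω i).2.1),
          (fun i => (ω i).2.1 : Fin N → 𝒞))) Prod.fst
        = pf (blk N p) (fun ω => (fA fun i => (ω i).1, fC fun i => (ω i).2.1)) :=
      funext fun z => (pf_comp (blk N p) _ _ z).symm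
    rw [c1] at m
    exact m
  -- g8 : H((J,K),C) = H(J,C)
  have g8 : Hd (pf (blk N p) fun ω => ((fA fun i => (ω i).1, fC fun i => (ω i).2.1),
        (fun i => (ω i).2.1 : Fin N → 𝒞)))
      = Hd (pf (blk N p) fun ω => (fA fun i => (ω i).1,
        (fun i => (ω i).2.1 : Fin N → 𝒞))) :=
    Hd_pf_comp_inj (blk N p)
      (fun ω => (fA fun i => (ω i).1, (fun i => (ω i).2.1 : Fin N → 𝒞)))
      (σ := fun x : κJ × (Fin N → 𝒞) => ((x.1, fC x.2), x.2))
      (by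
        rintro ⟨x, y⟩ ⟨x', y'⟩ h
        simp only [Prod.mk.injEq] at h
        exact Prod.ext h.1.1 h.2)
  -- g9 : H(J,C) ≤ H(J) + H(C)
  have g9 : Hd (pf (blk N p) fun ω => (fA fun i => (ω i).1,
        (fun i => (ω i).2.1 : Fin N → 𝒞)))
      ≤ Hd (pf (blk N p) fun ω => fA fun i => (ω i).1)
        + Hd (pf (blk N p) fun ω => (fun i => (ω i).2.1 : Fin N → 𝒞)) := by
    have m := Hd_subadd (pf (blk N p) fun ω => (fA fun i => (ω i).1,
      (fun i => (ω i).2.1 : Fin N → 𝒞))) (pf_nonneg _ hqnn _)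
      (by rw [sum_pf]; exact hqsum)
    have c1 : pf (pf (blk N p) fun ω => (fA fun i => (ω i).1,
          (fun i => (ω i).2.1 : Fin N → 𝒞))) Prod.fst
        = pf (blk N p) (fun ω => fA fun i => (ω i).1) :=
      funext fun z => (pf_comp (blk N p) _ _ z).symm
    have c2 : pf (pf (blk N p) fun ω => (fA fun i => (ω i).1,
          (fun i => (ω i).2.1 : Fin N → 𝒞))) Prod.snd
        = pf (blk N p) (fun ω => (fun i => (ω i).2.1 : Fin N → 𝒞)) :=
      funext fun z => (pf_comp (blk N p) _ _ z).symm
    rw [c1, c2] at m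
    exact m
  -- single-letter marginals are pmfs
  -- g10
  have g10 : Hd (pf (blk N p) fun ω => (fun i => (ω i).1 : Fin N → 𝒜))
      = N * Hd (pf p fun x => x.1) := by
    rw [show pf (blk N p) (fun ω => (fun i => (ω i).1 : Fin N → 𝒜))
        = fun f : Fin N → 𝒜 => ∏ i, pf p (fun x => x.1) (f i) from
      funext (pf_blk N p (fun x => x.1))]
    exact Hd_prod N _ (pf_nonneg p hp.1 _) (by rw [sum_pf]; exact hp.2)
  have g11 : Hd (pf (blk N p) fun ω => (fun i => (ω i).2.1 : Fin N → 𝒞))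
      = N * Hd (pf p fun x => x.2.1) := by
    rw [show pf (blk N p) (fun ω => (fun i => (ω i).2.1 : Fin N → 𝒞))
        = fun f : Fin N → 𝒞 => ∏ i, pf p (fun x => x.2.1) (f i) from
      funext (pf_blk N p (fun x => x.2.1))]
    exact Hd_prod N _ (pf_nonneg p hp.1 _) (by rw [sum_pf]; exact hp.2)
  have g12 : Hd (pf (blk N p) fun ω => (fun i => ((ω i).1, (ω i).2.1) : Fin N → 𝒜 × 𝒞))
      = N * Hd (pf p fun x => (x.1, x.2.1)) := by
    rw [show pf (blk N p) (fun ω => (fun i => ((ω i).1, (ω i).2.1) : Fin N → 𝒜 × 𝒞))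
        = fun f : Fin N → 𝒜 × 𝒞 => ∏ i, pf p (fun x => (x.1, x.2.1)) (f i) from
      funext (pf_blk N p (fun x => (x.1, x.2.1)))]
    exact Hd_prod N _ (pf_nonneg p hp.1 _) (by rw [sum_pf]; exact hp.2)
  have hcast : (N : ℝ) * (Hd (pf p fun x => x.1) + Hd (pf p fun x => x.2.1)
      - Hd (pf p fun x => (x.1, x.2.1)))
      = N * Hd (pf p fun x => x.1) + N * Hd (pf p fun x => x.2.1)
        - N * Hd (pf p fun x => (x.1, x.2.1)) := by ring
  linarith
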